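/- Every JSBAF (satisfying the structural restrictions, possibly with infinitely many arguments) has at least one preferred labeling, i.e., a ⊆-maximal (with respect to inclusion of IN-sets) admissible labeling. -/

import Mathlib

namespace JS

inductive Lab : Type
  | IN | OUT | UNDEC
deriving DecidableEq

structure JSBAF (A : Type) where
  att : A → A → Prop
  supp : Set A → A → Prop
  pref : A → A → Prop

variable {A : Type}

/-- Strict arguments: supported by the empty set or only by strict arguments. -/
inductive Strict (J : JSBAF A) : A → Prop
  | mk (S : Set A) (a : A) (h : J.supp S a) (hS : ∀ b ∈ S, Strict J b) : Strict J a

/-- Structural restrictions on JSBAFs. -/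
structure Restr (J : JSBAF A) : Prop where
  finSupp : ∀ S b, J.supp S b → S.Finite
  uniqSupp : ∀ S S' b, J.supp S b → J.supp S' b → S = S'
  acyc : ∀ a, ¬ Relation.TransGen (fun x y => ∃ S, J.supp S y ∧ x ∈ S) a a
  strictUnatt : ∀ a b, Strict J b → ¬ J.att a b
  prefRefl : ∀ a, J.pref a a
  prefTrans : ∀ a b c, J.pref a b → J.pref b c → J.pref a c
  prefTotal : ∀ a b, J.pref a b ∨ J.pref b a
  strictEq : ∀ a b, Strict J a → Strict J b → J.pref a b
  strictTop : ∀ a b, ¬ Strict J a → Strict J b → J.pref a b ∧ ¬ J.pref b a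

def inL (L : A → Lab) : Set A := {a | L a = Lab.IN}
def outL (L : A → Lab) : Set A := {a | L a = Lab.OUT}
def undecL (L : A → Lab) : Set A := {a | L a = Lab.UNDEC}

/-- Definition 2, item 1: legally IN. -/
def legallyIn (J : JSBAF A) (L : A → Lab) (a : A) : Prop :=
  (∀ b, J.att b a → L b = Lab.OUT) ∧
  ∀ S c, J.supp S c → a ∈ S → (∀ b ∈ S, b ≠ a → J.pref a b) →
    (L c = Lab.IN ∨
     (L c = Lab.UNDEC ∧ ∃ b ∈ S, b ≠ a ∧ (L b = Lab.OUT ∨ L b = Lab.UNDEC)) ∨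
     (L c = Lab.OUT ∧
       ((∃ b ∈ S, b ≠ a ∧ L b = Lab.OUT) ∨
        (∃ b₁ ∈ S, ∃ b₂ ∈ S, b₁ ≠ a ∧ b₂ ≠ a ∧ b₁ ≠ b₂ ∧
          L b₁ = Lab.UNDEC ∧ L b₂ = Lab.UNDEC))))

/-- Definition 2, item 2: legally OUT. -/
def legallyOut (J : JSBAF A) (L : A → Lab) (a : A) : Prop :=
  (∃ b, J.att b a ∧ L b = Lab.IN) ∨
  (∃ (n : ℕ) (S : ℕ → Set A) (b : ℕ → A),
    (∀ i ≤ n, J.supp (S i) (b i)) ∧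
    (∀ i < n, b i ∈ S (i + 1)) ∧
    a ∈ S 0 ∧
    (∀ d ∈ S 0, d ≠ a → L d = Lab.IN) ∧
    (∃ c, J.att c (b n) ∧ L c = Lab.IN) ∧
    (∀ i ≤ n, L (b i) = Lab.OUT) ∧
    (∀ i, 1 ≤ i → i ≤ n → ∀ d ∈ S i, d ≠ b (i - 1) → L d = Lab.IN) ∧
    (∀ d ∈ S 0, d ≠ a → J.pref a d))

/-- Admissible labelings. -/
def Admissible (J : JSBAF A) (L : A → Lab) : Prop :=
  (∀ a, L a = Lab.IN → legallyIn J L a) ∧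
  (∀ a, L a = Lab.OUT ↔ legallyOut J L a) ∧
  (∀ a, Strict J a → L a = Lab.IN)

/-- Preferred labelings: maximal admissible w.r.t. inclusion of IN-sets. -/
def Preferred (J : JSBAF A) (L : A → Lab) : Prop :=
  Admissible J L ∧ ∀ L', Admissible J L' → ¬ (inL L ⊂ inL L')

/-- The iterated OUT-sets of the SIM labeling. -/
def simO (J : JSBAF A) : ℕ → Set A
  | 0 => {a | ∃ b, Strict J b ∧ J.att b a}
  | n + 1 => simO J n ∪
      {a | ∃ S c, J.supp S c ∧ a ∈ S ∧ c ∈ simO J n ∧ ∀ d ∈ S, d ≠ a → Strict J d}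

def simIn (J : JSBAF A) : Set A := {a | Strict J a}
def simOut (J : JSBAF A) : Set A := ⋃ n, simO J n

open Classical in
/-- The strict-including-minimal labeling. -/
noncomputable def SIM (J : JSBAF A) : A → Lab := fun a =>
  if Strict J a then Lab.IN else if a ∈ simOut J then Lab.OUT else Lab.UNDEC

/-- The order on labelings. -/
def leL (L₁ L₂ : A → Lab) : Prop := inL L₁ ⊆ inL L₂ ∧ outL L₁ ⊆ outL L₂

end JS

/-!
Zorn's lemma on the admissible labelings ordered by `leL`, inclusion of both the IN- and the
OUT-set. The SIM labeling is admissible, so this family is nonempty. Along a `leL`-chain no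
argument is IN in one member and OUT in another, so the chain has a pointwise union
`chainSup`. It is admissible: attackers are handled by monotonicity, and every other condition
of Definition 2 involves only finitely many arguments (supports are finite), on which the union
agrees with a single member of the chain. Finally, between admissible labelings a larger IN-set
forces a larger OUT-set (`Admissible.leL_of_inL_subset`), so a `leL`-maximal admissible
labeling is preferred.
-/

namespace JS

variable {A : Type} {J : JSBAF A} {L L' : A → Lab}

lemma Restr.exists_pref_min (hR : Restr J) {S : Set A} (hS : S.Finite) (hne : S.Nonempty) :
    ∃ d ∈ S, ∀ e ∈ S, J.pref d e := by
  let _ : LE A := ⟨J.pref⟩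
  have : IsTrans A (· ≤ ·) := ⟨hR.prefTrans⟩
  obtain ⟨d, hdS, hmin⟩ := hS.exists_minimal hne
  exact ⟨d, hdS, fun e he => (hR.prefTotal d e).elim id (hmin he)⟩

lemma Strict.of_supp {S : Set A} {a c : A} (hsupp : J.supp S c) (ha : Strict J a)
    (hS : ∀ d ∈ S, d ≠ a → Strict J d) : Strict J c :=
  Strict.mk S c hsupp fun d hd => (em (d = a)).elim (fun hda => hda ▸ ha) (hS d hd)

instance : Std.Refl (leL (A := A)) := ⟨fun _ => ⟨subset_rfl, subset_rfl⟩⟩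

lemma leL_trans {L₁ L₂ L₃ : A → Lab} (h₁₂ : leL L₁ L₂) (h₂₃ : leL L₂ L₃) : leL L₁ L₃ :=
  ⟨h₁₂.1.trans h₂₃.1, h₁₂.2.trans h₂₃.2⟩

/-- The part of the condition in `legallyOut` that does not mention the argument `a ∈ S 0`
itself, with the last conjunct reindexed by `i ↦ i + 1`. -/
structure IsOutChain (J : JSBAF A) (L : A → Lab) (n : ℕ) (S : ℕ → Set A) (b : ℕ → A) :
    Prop where
  supp : ∀ i ≤ n, J.supp (S i) (b i)
  mem : ∀ i < n, b i ∈ S (i + 1)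
  attacked : ∃ c, J.att c (b n) ∧ L c = Lab.IN
  out : ∀ i ≤ n, L (b i) = Lab.OUT
  in_of_ne : ∀ i < n, ∀ d ∈ S (i + 1), d ≠ b i → L d = Lab.IN

lemma legallyOut_iff {a : A} :
    legallyOut J L a ↔ (∃ b, J.att b a ∧ L b = Lab.IN) ∨
      ∃ n S b, IsOutChain J L n S b ∧ a ∈ S 0 ∧
        ∀ d ∈ S 0, d ≠ a → L d = Lab.IN ∧ J.pref a d := by
  refine or_congr_right ⟨?_, ?_⟩
  · rintro ⟨n, S, b, hsupp, hmem, haS, hS, hatt, hout, hin, hpref⟩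
    exact ⟨n, S, b, ⟨hsupp, hmem, hatt, hout, fun i hi => hin (i + 1) (by omega) hi⟩, haS,
      fun d hd hda => ⟨hS d hd hda, hpref d hd hda⟩⟩
  · rintro ⟨n, S, b, ⟨hsupp, hmem, hatt, hout, hin⟩, haS, hS⟩
    refine ⟨n, S, b, hsupp, hmem, haS, fun d hd hda => (hS d hd hda).1, hatt, hout, ?_,
      fun d hd hda => (hS d hd hda).2⟩
    rintro (_ | i) hi₁ hi₂
    · omega
    · exact hin i hi₂

lemma IsOutChain.mono {n : ℕ} {S : ℕ → Set A} {b : ℕ → A} (h : IsOutChain J L n S b)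
    (hin : inL L ⊆ inL L') (hout : ∀ i ≤ n, L' (b i) = Lab.OUT) : IsOutChain J L' n S b where
  supp := h.supp
  mem := h.mem
  attacked := h.attacked.imp fun _ hc => ⟨hc.1, hin hc.2⟩
  out := hout
  in_of_ne i hi d hd hdb := hin (h.in_of_ne i hi d hd hdb)

lemma IsOutChain.tail {n : ℕ} {S : ℕ → Set A} {b : ℕ → A} (h : IsOutChain J L (n + 1) S b) :
    IsOutChain J L n (fun i => S (i + 1)) (fun i => b (i + 1)) where
  supp i hi := h.supp (i + 1) (by omega)
  mem i hi := h.mem (i + 1) (by omega)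
  attacked := h.attacked
  out i hi := h.out (i + 1) (by omega)
  in_of_ne i hi := h.in_of_ne (i + 1) (by omega)

lemma IsOutChain.cons {n : ℕ} {S : ℕ → Set A} {b : ℕ → A} (h : IsOutChain J L n S b)
    {T : Set A} {c : A} (hsupp : J.supp T c) (hc : L c = Lab.OUT) (hcS : c ∈ S 0)
    (hS : ∀ d ∈ S 0, d ≠ c → L d = Lab.IN) :
    IsOutChain J L (n + 1) (fun | 0 => T | i + 1 => S i) (fun | 0 => c | i + 1 => b i) where
  supp
    | 0, _ => hsupp
    | i + 1, hi => h.supp i (by omega)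
  mem
    | 0, _ => hcS
    | i + 1, hi => h.mem i (by omega)
  attacked := h.attacked
  out
    | 0, _ => hc
    | i + 1, hi => h.out i (by omega)
  in_of_ne
    | 0, _ => hS
    | i + 1, hi => h.in_of_ne i (by omega)

lemma legallyOut_mono (hle : leL L L') {a : A} (h : legallyOut J L a) : legallyOut J L' a := by
  refine legallyOut_iff.mpr ((legallyOut_iff.mp h).imp ?_ ?_)
  · exact fun ⟨b, hb, hbIn⟩ => ⟨b, hb, hle.1 hbIn⟩
  · exact fun ⟨n, S, b, hch, haS, hS⟩ =>
      ⟨n, S, b, hch.mono hle.1 fun i hi => hle.2 (hch.out i hi), haS,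
        fun d hd hda => ⟨hle.1 (hS d hd hda).1, (hS d hd hda).2⟩⟩

lemma eq_out_of_legallyIn_of_supp {S : Set A} {c d x : A} (hd : legallyIn J L d)
    (hsupp : J.supp S c) (hdS : d ∈ S) (hdmin : ∀ e ∈ S, e ≠ d → J.pref d e)
    (hc : L c = Lab.OUT) (hS : ∀ e ∈ S, e ≠ x → L e = Lab.IN) : L x = Lab.OUT := by
  have eq_of_ne_in {e : A} (he : e ∈ S) (hne : L e ≠ Lab.IN) : e = x := by
    by_contra hex
    exact hne (hS e he hex)
  obtain h | ⟨h, -⟩ | ⟨-, hOut⟩ := hd.2 S c hsupp hdS hdmin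
  · simp [hc] at h
  · simp [hc] at h
  -- Only `x` can fail to be IN, so it is the OUT member, or both UNDEC members, of the clause.
  obtain ⟨e, he, -, heOut⟩ | ⟨e₁, he₁, e₂, he₂, -, -, hne, hu₁, hu₂⟩ := hOut
  · rwa [← eq_of_ne_in he (by simp [heOut])]
  · have h₁ := eq_of_ne_in he₁ (by simp [hu₁])
    have h₂ := eq_of_ne_in he₂ (by simp [hu₂])
    exact absurd (h₁.trans h₂.symm) hne

/-- By induction on the length: a `pref`-minimal member of the support of the next link is IN in
`L'`, and as such forces the current link to be OUT. -/
lemma IsOutChain.of_inL_subset (hR : Restr J) (hL' : Admissible J L') (hin : inL L ⊆ inL L') :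
    ∀ {n : ℕ} {S : ℕ → Set A} {b : ℕ → A}, IsOutChain J L n S b → IsOutChain J L' n S b
  | 0, S, b, h => h.mono hin fun i hi => by
      obtain rfl : i = 0 := by omega
      obtain ⟨c, hc, hcIn⟩ := h.attacked
      exact (hL'.2.1 _).mpr (legallyOut_iff.mpr (Or.inl ⟨c, hc, hin hcIn⟩))
  | n + 1, S, b, h => by
    have htail := IsOutChain.of_inL_subset hR hL' hin h.tail
    have hsupp : J.supp (S 1) (b 1) := h.supp 1 (by omega)
    have hothers : ∀ d ∈ S 1, d ≠ b 0 → L' d = Lab.IN :=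
      fun d hd hdb => hin (h.in_of_ne 0 (by omega) d hd hdb)
    have hb₀ : L' (b 0) = Lab.OUT := by
      by_cases hmin : ∀ d ∈ S 1, d ≠ b 0 → J.pref (b 0) d
      · exact (hL'.2.1 _).mpr (legallyOut_iff.mpr (Or.inr ⟨n, _, _, htail,
          h.mem 0 (by omega), fun d hd hdb => ⟨hothers d hd hdb, hmin d hd hdb⟩⟩))
      · push Not at hmin
        obtain ⟨e, he, -, hbe⟩ := hmin
        obtain ⟨d, hdS, hdmin⟩ := hR.exists_pref_min (hR.finSupp _ _ hsupp) ⟨e, he⟩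
        have hdb : d ≠ b 0 := by
          rintro rfl
          exact hbe (hdmin e he)
        exact eq_out_of_legallyIn_of_supp (hL'.1 d (hothers d hdS hdb)) hsupp hdS
          (fun e he _ => hdmin e he) (htail.out 0 (by omega)) hothers
    refine h.mono hin fun i hi => ?_
    rcases i with _ | i
    · exact hb₀
    · exact htail.out i (by omega)

lemma Admissible.leL_of_inL_subset (hR : Restr J) (hL : Admissible J L) (hL' : Admissible J L')
    (hin : inL L ⊆ inL L') : leL L L' := by
  refine ⟨hin, fun a ha => (hL'.2.1 a).mpr (legallyOut_iff.mpr ?_)⟩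
  rcases legallyOut_iff.mp ((hL.2.1 a).mp ha) with ⟨c, hc, hcIn⟩ | ⟨n, S, b, hch, haS, hS⟩
  · exact Or.inl ⟨c, hc, hin hcIn⟩
  · exact Or.inr ⟨n, S, b, hch.of_inL_subset hR hL' hin, haS,
      fun d hd hda => ⟨hin (hS d hd hda).1, (hS d hd hda).2⟩⟩

lemma legallyOut_of_supp {S : Set A} {a c : A} (hsupp : J.supp S c) (hc : L c = Lab.OUT)
    (hcOut : legallyOut J L c) (haS : a ∈ S) (hS : ∀ d ∈ S, d ≠ a → L d = Lab.IN ∧ J.pref a d) :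
    legallyOut J L a := by
  refine legallyOut_iff.mpr (Or.inr ?_)
  rcases legallyOut_iff.mp hcOut with hatt | ⟨n, S', b, hch, hcS, hS'⟩
  · refine ⟨0, fun _ => S, fun _ => c, ⟨fun _ _ => hsupp, fun _ hi => absurd hi (by omega), hatt,
      fun _ _ => hc, fun _ hi => absurd hi (by omega)⟩, haS, hS⟩
  · exact ⟨n + 1, _, _, hch.cons hsupp hc hcS fun d hd hdc => (hS' d hd hdc).1, haS, hS⟩

lemma sim_eq_in_iff {a : A} : SIM J a = Lab.IN ↔ Strict J a := by
  unfold SIM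
  split_ifs <;> simp_all

lemma sim_eq_out_iff {a : A} : SIM J a = Lab.OUT ↔ ¬ Strict J a ∧ a ∈ simOut J := by
  unfold SIM
  split_ifs <;> simp_all

lemma not_strict_of_mem_simO (hR : Restr J) : ∀ {n : ℕ} {a : A}, a ∈ simO J n → ¬ Strict J a
  | 0, a, ⟨b, _, hba⟩, ha => hR.strictUnatt b a ha hba
  | _ + 1, _, Or.inl h, ha => not_strict_of_mem_simO hR h ha
  | _ + 1, _, Or.inr ⟨_, _, hsupp, _, hc, hS⟩, ha =>
    not_strict_of_mem_simO hR hc (ha.of_supp hsupp hS)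

lemma legallyOut_sim_of_mem_simO (hR : Restr J) :
    ∀ {n : ℕ} {a : A}, a ∈ simO J n → legallyOut J (SIM J) a
  | 0, _, ⟨b, hb, hba⟩ => Or.inl ⟨b, hba, sim_eq_in_iff.mpr hb⟩
  | _ + 1, _, Or.inl h => legallyOut_sim_of_mem_simO hR h
  | n + 1, a, ha@(Or.inr ⟨_, _, hsupp, haS, hc, hS⟩) =>
    legallyOut_of_supp hsupp
      (sim_eq_out_iff.mpr ⟨not_strict_of_mem_simO hR hc, Set.mem_iUnion_of_mem n hc⟩)
      (legallyOut_sim_of_mem_simO hR hc) haS fun d hd hda =>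
        ⟨sim_eq_in_iff.mpr (hS d hd hda),
          (hR.strictTop a d (not_strict_of_mem_simO hR ha) (hS d hd hda)).1⟩

lemma sim_admissible (hR : Restr J) : Admissible J (SIM J) := by
  refine ⟨fun a ha => ?_, fun a => ⟨fun ha => ?_, fun ha => ?_⟩, fun a => sim_eq_in_iff.mpr⟩
  · have ha : Strict J a := sim_eq_in_iff.mp ha
    refine ⟨fun b hba => absurd hba (hR.strictUnatt b a ha), fun S c hsupp _ hpref => ?_⟩
    refine Or.inl (sim_eq_in_iff.mpr (ha.of_supp hsupp fun d hd hda => ?_))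
    by_contra hnd
    exact (hR.strictTop d a hnd ha).2 (hpref d hd hda)
  · obtain ⟨n, hn⟩ := Set.mem_iUnion.mp (sim_eq_out_iff.mp ha).2
    exact legallyOut_sim_of_mem_simO hR hn
  · refine sim_eq_out_iff.mpr ?_
    rcases legallyOut_iff.mp ha with ⟨b, hba, hb⟩ | ⟨n, S, b, hch, haS, hS⟩
    · have hb : Strict J b := sim_eq_in_iff.mp hb
      exact ⟨fun ha => hR.strictUnatt b a ha hba, Set.mem_iUnion_of_mem 0 ⟨b, hb, hba⟩⟩
    · obtain ⟨hb₀, hb₀Out⟩ := sim_eq_out_iff.mp (hch.out 0 (Nat.zero_le n))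
      obtain ⟨m, hm⟩ := Set.mem_iUnion.mp hb₀Out
      have hstrict : ∀ d ∈ S 0, d ≠ a → Strict J d :=
        fun d hd hda => sim_eq_in_iff.mp (hS d hd hda).1
      have hsupp := hch.supp 0 (Nat.zero_le n)
      exact ⟨fun ha => hb₀ (ha.of_supp hsupp hstrict),
        Set.mem_iUnion_of_mem (m + 1) (Or.inr ⟨S 0, b 0, hsupp, haS, hm, hstrict⟩)⟩

lemma IsOutChain.exists_finite_eqOn (hR : Restr J) {n : ℕ} {S : ℕ → Set A} {b : ℕ → A}
    (h : IsOutChain J L n S b) :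
    ∃ T : Set A, T.Finite ∧ ∀ L', Set.EqOn L L' T → IsOutChain J L' n S b := by
  obtain ⟨e, he, heIn⟩ := h.attacked
  refine ⟨insert e (⋃ i ∈ Set.Iic n, insert (b i) (S i)),
    ((Set.finite_Iic n).biUnion fun i hi => (hR.finSupp _ _ (h.supp i hi)).insert (b i)).insert e,
    fun L' hL' => ⟨h.supp, h.mem, ⟨e, he, ?_⟩, fun i hi => ?_, fun i hi d hd hdb => ?_⟩⟩
  · rw [← hL' (Set.mem_insert e _), heIn]
  · rw [← hL' (Set.mem_insert_of_mem e (Set.mem_biUnion (x := i) hi (Set.mem_insert _ _))),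
      h.out i hi]
  · rw [← hL' (Set.mem_insert_of_mem e (Set.mem_biUnion (x := i + 1) (Set.mem_Iic.mpr hi)
      (Set.mem_insert_of_mem _ hd))), h.in_of_ne i hi d hd hdb]

lemma exists_finite_eqOn_of_legallyOut (hR : Restr J) {a : A} (h : legallyOut J L a) :
    ∃ T : Set A, T.Finite ∧ ∀ L', Set.EqOn L L' T → legallyOut J L' a := by
  rcases legallyOut_iff.mp h with ⟨c, hc, hcIn⟩ | ⟨n, S, b, hch, haS, hS⟩
  · exact ⟨{c}, Set.finite_singleton c, fun L' hL' =>
      legallyOut_iff.mpr (Or.inl ⟨c, hc, (hL' rfl).symm.trans hcIn⟩)⟩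
  · obtain ⟨T, hT, hchT⟩ := hch.exists_finite_eqOn hR
    refine ⟨T ∪ S 0, hT.union (hR.finSupp _ _ (hch.supp 0 (Nat.zero_le n))), fun L' hL' => ?_⟩
    refine legallyOut_iff.mpr (Or.inr ⟨n, S, b, hchT L' (hL'.mono Set.subset_union_left), haS,
      fun d hd hda => ⟨?_, (hS d hd hda).2⟩⟩)
    rw [← hL' (Set.mem_union_right T hd), (hS d hd hda).1]

section chainSup

variable {c : Set (A → Lab)}

open Classical in
noncomputable def chainSup (c : Set (A → Lab)) : A → Lab := fun x =>
  if ∃ L ∈ c, L x = Lab.IN then Lab.IN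
  else if ∃ L ∈ c, L x = Lab.OUT then Lab.OUT else Lab.UNDEC

lemma chainSup_eq_in_iff {x : A} : chainSup c x = Lab.IN ↔ ∃ L ∈ c, L x = Lab.IN := by
  unfold chainSup
  split_ifs <;> simp_all

lemma chainSup_eq_out_iff (hc : IsChain leL c) {x : A} :
    chainSup c x = Lab.OUT ↔ ∃ L ∈ c, L x = Lab.OUT := by
  unfold chainSup
  split_ifs with hIn hOut
  · obtain ⟨L, hL, hLx⟩ := hIn
    refine iff_of_false (by simp) fun ⟨L', hL', hL'x⟩ => ?_
    rcases hc.total hL hL' with hle | hle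
    · simpa [inL, hL'x] using hle.1 hLx
    · simpa [outL, hLx] using hle.2 hL'x
  · simpa using hOut
  · simpa using hOut

lemma eq_undec_of_chainSup_eq_undec {x : A} (hx : chainSup c x = Lab.UNDEC) (hL : L ∈ c) :
    L x = Lab.UNDEC := by
  unfold chainSup at hx
  cases hLx : L x <;> split_ifs at hx <;> simp_all

lemma leL_chainSup (hc : IsChain leL c) (hL : L ∈ c) : leL L (chainSup c) :=
  ⟨fun _ hx => chainSup_eq_in_iff.mpr ⟨L, hL, hx⟩,
    fun _ hx => (chainSup_eq_out_iff hc).mpr ⟨L, hL, hx⟩⟩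

lemma exists_eqOn_chainSup (hc : IsChain leL c) (hne : c.Nonempty) {T : Set A} (hT : T.Finite) :
    ∃ L ∈ c, Set.EqOn L (chainSup c) T := by
  have eq_of_leL {L L' : A → Lab} {x : A} (hL' : L' ∈ c) (hle : leL L L')
      (hx : L x = chainSup c x) : L' x = chainSup c x := by
    cases hsup : chainSup c x
    · exact hle.1 (hx.trans hsup)
    · exact hle.2 (hx.trans hsup)
    · exact eq_undec_of_chainSup_eq_undec hsup hL'
  have exists_eq (x : A) : ∃ L ∈ c, L x = chainSup c x := by
    cases hsup : chainSup c x
    · exact chainSup_eq_in_iff.mp hsup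
    · exact (chainSup_eq_out_iff hc).mp hsup
    · obtain ⟨L, hL⟩ := hne
      exact ⟨L, hL, eq_undec_of_chainSup_eq_undec hsup hL⟩
  induction T, hT using Set.Finite.induction_on with
  | empty => exact hne.imp fun L hL => ⟨hL, Set.eqOn_empty _ _⟩
  | @insert x T _ _ ih =>
    obtain ⟨L₁, hL₁, hT⟩ := ih
    obtain ⟨L₂, hL₂, hx⟩ := exists_eq x
    rcases hc.total hL₁ hL₂ with hle | hle
    · refine ⟨L₂, hL₂, ?_⟩
      rintro y (rfl | hy)
      exacts [hx, eq_of_leL hL₂ hle (hT hy)]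
    · refine ⟨L₁, hL₁, ?_⟩
      rintro y (rfl | hy)
      exacts [eq_of_leL hL₁ hle hx, hT hy]

lemma legallyIn_chainSup (hR : Restr J) (hc : IsChain leL c) (hadm : ∀ L ∈ c, Admissible J L)
    {a : A} (ha : chainSup c a = Lab.IN) : legallyIn J (chainSup c) a := by
  obtain ⟨La, hLa, haIn⟩ := chainSup_eq_in_iff.mp ha
  refine ⟨fun b hb => (leL_chainSup hc hLa).2 (((hadm La hLa).1 a haIn).1 b hb),
    fun S x hsupp haS hpref => ?_⟩
  obtain ⟨L, hL, hEq⟩ := exists_eqOn_chainSup hc ⟨La, hLa⟩ ((hR.finSupp _ _ hsupp).insert x)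
  have hx : L x = chainSup c x := hEq (Set.mem_insert x S)
  have hS : ∀ b ∈ S, L b = chainSup c b := fun b hb => hEq (Set.mem_insert_of_mem x hb)
  have := ((hadm L hL).1 a ((hS a haS).trans ha)).2 S x hsupp haS hpref
  grind

lemma admissible_chainSup (hR : Restr J) (hc : IsChain leL c) (hne : c.Nonempty)
    (hadm : ∀ L ∈ c, Admissible J L) : Admissible J (chainSup c) := by
  refine ⟨fun a => legallyIn_chainSup hR hc hadm, fun a => ⟨fun ha => ?_, fun ha => ?_⟩,
    fun a ha => ?_⟩
  · obtain ⟨L, hL, haOut⟩ := (chainSup_eq_out_iff hc).mp ha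
    exact legallyOut_mono (leL_chainSup hc hL) (((hadm L hL).2.1 a).mp haOut)
  · obtain ⟨T, hT, hdet⟩ := exists_finite_eqOn_of_legallyOut hR ha
    obtain ⟨L, hL, hEq⟩ := exists_eqOn_chainSup hc hne hT
    exact (leL_chainSup hc hL).2 (((hadm L hL).2.1 a).mpr (hdet L hEq.symm))
  · obtain ⟨L, hL⟩ := hne
    exact (leL_chainSup hc hL).1 ((hadm L hL).2.2 a ha)

end chainSup

lemma exists_leL_maximal_admissible (hR : Restr J) :
    ∃ M, Admissible J M ∧ ∀ L, Admissible J L → leL M L → leL L M := by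
  have : Nonempty {L // Admissible J L} := ⟨⟨SIM J, sim_admissible hR⟩⟩
  have hbound (c : Set {L // Admissible J L}) (hc : IsChain (fun L L' => leL L.1 L'.1) c)
      (hne : c.Nonempty) : ∃ M : {L // Admissible J L}, ∀ L ∈ c, leL L.1 M.1 := by
    have hc' : IsChain leL (Subtype.val '' c) :=
      hc.image_of_map_rel _ _ Subtype.val fun _ _ => id
    refine ⟨⟨chainSup (Subtype.val '' c), admissible_chainSup hR hc' (hne.image _) ?_⟩,
      fun L hL => leL_chainSup hc' (Set.mem_image_of_mem _ hL)⟩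
    rintro _ ⟨L, -, rfl⟩
    exact L.2
  obtain ⟨⟨M, hM⟩, hmax⟩ := exists_maximal_of_nonempty_chains_bounded hbound leL_trans
  exact ⟨M, hM, fun L hL => hmax ⟨L, hL⟩⟩

end JS

open JS in
/-- Every JSBAF satisfying the structural restrictions (possibly with infinitely
many arguments) has at least one preferred labeling, i.e., an admissible labeling whose IN-set
is ⊆-maximal among IN-sets of admissible labelings. -/
theorem preferred_nonempty {A : Type} (J : JSBAF A) (hR : Restr J) :
    ∃ L : A → Lab, Admissible J L ∧ ∀ L' : A → Lab, Admissible J L' → ¬ (inL L ⊂ inL L') := by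
  obtain ⟨M, hM, hmax⟩ := exists_leL_maximal_admissible hR
  exact ⟨M, hM, fun L' hL' hlt => hlt.2 (hmax L' hL' (hM.leL_of_inL_subset hR hL' hlt.1)).1⟩
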